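/- arXiv:2205.14317 — 2 statements merged into one kernel-verified Lean document; each statement's English description precedes it below -/
import Mathlib

section
/- Let w, v ∈ ℝⁿ, let x, x' ∈ [0,1]ⁿ with x'ᵢ ≤ xᵢ for all i, let c, c' ≥ 0 with c' ≤ c, and let Δ* > 0 and ρk, ηk, xk ∈ ℝ with xk ≥ 0. Suppose b_{x,w} + Δ*·(b_{x,v} + c) < |ρk| - Δ*·(|ηk| + xk). Then for the descendant pattern x': |⟨x', w⟩| + Δ*·(|⟨x', v⟩| + c') < |ρk| - Δ*·(|ηk| + xk), so the inclusion equation at step size Δ* has no solution for x' (the subtree rooted at x can be pruned). -/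
open Finset

noncomputable def bnd (n : ℕ) (x w : Fin n → ℝ) : ℝ :=
  max (∑ i ∈ Finset.univ.filter (fun i => 0 < w i), |w i| * x i)
      (∑ i ∈ Finset.univ.filter (fun i => w i < 0), |w i| * x i)

theorem sum_mul_le_sum_filter_pos {ι : Type*} (s : Finset ι) {w x x' : ι → ℝ}
    (hx' : ∀ i ∈ s, 0 ≤ x' i) (hmono : ∀ i ∈ s, x' i ≤ x i) :
    ∑ i ∈ s, x' i * w i ≤ ∑ i ∈ s.filter (fun i => 0 < w i), |w i| * x i := by
  rw [sum_filter]
  refine sum_le_sum fun i hi => ?_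
  split_ifs with hw
  · rw [abs_of_pos hw, mul_comm (w i)]
    exact mul_le_mul_of_nonneg_right (hmono i hi) hw.le
  · exact mul_nonpos_of_nonneg_of_nonpos (hx' i hi) (not_lt.mp hw)

theorem abs_sum_mul_le_bnd {n : ℕ} {w x x' : Fin n → ℝ}
    (hx' : ∀ i, 0 ≤ x' i) (hmono : ∀ i, x' i ≤ x i) :
    |∑ i, x' i * w i| ≤ bnd n x w := by
  rw [abs_le']
  constructor
  · exact (sum_mul_le_sum_filter_pos univ (w := w) (fun i _ => hx' i) (fun i _ => hmono i)).trans
      (le_max_left _ _)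
  · have h := sum_mul_le_sum_filter_pos univ (w := -w) (fun i _ => hx' i) (fun i _ => hmono i)
    simp only [Pi.neg_apply, mul_neg, sum_neg_distrib, neg_pos, abs_neg] at h
    exact h.trans (le_max_right _ _)

theorem pruning_descendant_general (n : ℕ) (w v x x' : Fin n → ℝ)
    (hx' : ∀ i, 0 ≤ x' i ∧ x' i ≤ 1)
    (hmono : ∀ i, x' i ≤ x i)
    (c c' : ℝ) (hcc : c' ≤ c)
    (Δ ρk ηk xk : ℝ) (hΔ : 0 < Δ)
    (hprune : bnd n x w + Δ * (bnd n x v + c) < |ρk| - Δ * (|ηk| + xk)) :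
    |∑ i, x' i * w i| + Δ * (|∑ i, x' i * v i| + c') < |ρk| - Δ * (|ηk| + xk) := by
  have hw : |∑ i, x' i * w i| ≤ bnd n x w := abs_sum_mul_le_bnd (fun i => (hx' i).1) hmono
  have hv : |∑ i, x' i * v i| ≤ bnd n x v := abs_sum_mul_le_bnd (fun i => (hx' i).1) hmono
  calc |∑ i, x' i * w i| + Δ * (|∑ i, x' i * v i| + c')
      ≤ bnd n x w + Δ * (bnd n x v + c) := by gcongr
    _ < |ρk| - Δ * (|ηk| + xk) := hprune

theorem pruning_descendant (n : ℕ) (w v x x' : Fin n → ℝ)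
    (hx : ∀ i, 0 ≤ x i ∧ x i ≤ 1) (hx' : ∀ i, 0 ≤ x' i ∧ x' i ≤ 1)
    (hmono : ∀ i, x' i ≤ x i)
    (c c' : ℝ) (hc : 0 ≤ c') (hcc : c' ≤ c)
    (Δ ρk ηk xk : ℝ) (hΔ : 0 < Δ) (hxk : 0 ≤ xk)
    (hprune : bnd n x w + Δ * (bnd n x v + c) < |ρk| - Δ * (|ηk| + xk)) :
    |∑ i, x' i * w i| + Δ * (|∑ i, x' i * v i| + c') < |ρk| - Δ * (|ηk| + xk) :=
  pruning_descendant_general n w v x x' hx' hmono c c' hcc Δ ρk ηk xk hΔ hprune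
end

section
/- Fix λ > 0, a design matrix X ∈ ℝ^{(n+1)×p} whose last row is x_{n+1}, and an active set A ⊆ {1,…,p} such that X_Aᵀ X_A is invertible. Suppose for all τ in an interval [τ₁, τ₂) the LASSO solution β(τ) with augmented response y(τ) has support exactly A with constant signs s_A. Then β_A(τ) = β_A(τ₁) + (τ − τ₁)·ν_A where ν_A = (X_Aᵀ X_A)^{-1} x_{n+1,A}; in particular τ ↦ β(τ) is affine on [τ₁, τ₂). -/
/-
Subtracting the KKT equations at `τ₁` and at `τ` eliminates the common term `λ s_A` and all data
rows of `y(τ)`, leaving `(X_Aᵀ X_A)(β_A(τ) − β_A(τ₁)) = (τ − τ₁) x_{n+1,A}`; inverting the Gram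
matrix gives the affine formula.
-/

open Matrix

/-- Augmented response vector: first `n` coordinates are `y₀`, last is `τ`. -/
noncomputable def yAug (n : ℕ) (y0 : Fin n → ℝ) (τ : ℝ) : Fin (n + 1) → ℝ :=
  fun i => if h : (i : ℕ) < n then y0 ⟨i, h⟩ else τ

theorem yAug_sub_yAug (n : ℕ) (y0 : Fin n → ℝ) (τ σ : ℝ) :
    yAug n y0 τ - yAug n y0 σ = Pi.single (Fin.last n) (τ - σ) := by
  funext i
  by_cases hi : (i : ℕ) < n
  · have hne : i ≠ Fin.last n := Fin.ne_of_lt hi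
    simp [yAug, hi, hne]
  · obtain rfl : i = Fin.last n := Fin.eq_last_of_not_lt hi
    simp [yAug]

theorem transpose_mulVec_yAug_sub_yAug (n q : ℕ) (X : Matrix (Fin (n + 1)) (Fin q) ℝ)
    (y0 : Fin n → ℝ) (τ σ : ℝ) :
    Xᵀ *ᵥ yAug n y0 τ - Xᵀ *ᵥ yAug n y0 σ = (τ - σ) • fun j => X (Fin.last n) j := by
  rw [← mulVec_sub, yAug_sub_yAug]
  ext j
  simp [mul_comm]

theorem Matrix.eq_add_smul_inv_mulVec_of_mulVec_sub {ι R : Type*} [Fintype ι] [DecidableEq ι]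
    [CommRing R] {M : Matrix ι ι R} (hM : IsUnit M) {u v c : ι → R} {t : R}
    (h : M *ᵥ (u - v) = t • c) : u = v + t • M⁻¹ *ᵥ c := by
  have hinv : M⁻¹ * M = 1 := nonsing_inv_mul M ((isUnit_iff_isUnit_det M).mp hM)
  rw [← mulVec_smul, ← h, mulVec_mulVec, hinv, one_mulVec, add_sub_cancel]

theorem tau_path_piecewise_linear_general (n q : ℕ)
    (XA : Matrix (Fin (n + 1)) (Fin q) ℝ) (lam : ℝ)
    (sA : Fin q → ℝ) (y0 : Fin n → ℝ) (βA : ℝ → Fin q → ℝ)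
    (τ₁ τ₂ : ℝ) (hτ : τ₁ < τ₂)
    (hinv : IsUnit (XAᵀ * XA))
    (hkkt : ∀ τ ∈ Set.Ico τ₁ τ₂,
      (XAᵀ * XA).mulVec (βA τ) = XAᵀ.mulVec (yAug n y0 τ) - lam • sA) :
    ∀ τ ∈ Set.Ico τ₁ τ₂,
      βA τ = βA τ₁ + (τ - τ₁) • (XAᵀ * XA)⁻¹.mulVec (fun j => XA (Fin.last n) j) := by
  intro τ hτmem
  apply eq_add_smul_inv_mulVec_of_mulVec_sub hinv
  rw [mulVec_sub, hkkt τ hτmem, hkkt τ₁ ⟨le_rfl, hτ⟩, sub_sub_sub_cancel_right,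
    transpose_mulVec_yAug_sub_yAug]

theorem tau_path_piecewise_linear (n q : ℕ)
    (XA : Matrix (Fin (n + 1)) (Fin q) ℝ) (lam : ℝ) (hlam : 0 < lam)
    (sA : Fin q → ℝ) (y0 : Fin n → ℝ) (βA : ℝ → Fin q → ℝ)
    (τ₁ τ₂ : ℝ) (hτ : τ₁ < τ₂)
    (hinv : IsUnit (XAᵀ * XA))
    (hkkt : ∀ τ ∈ Set.Ico τ₁ τ₂,
      (XAᵀ * XA).mulVec (βA τ) = XAᵀ.mulVec (yAug n y0 τ) - lam • sA) :
    ∀ τ ∈ Set.Ico τ₁ τ₂,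
      βA τ = βA τ₁ + (τ - τ₁) • (XAᵀ * XA)⁻¹.mulVec (fun j => XA (Fin.last n) j) :=
  tau_path_piecewise_linear_general n q XA lam sA y0 βA τ₁ τ₂ hτ hinv hkkt
end
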